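/- arXiv:2309.01251 — 2 statements merged into one kernel-verified Lean document; each statement's English description precedes it below -/
import Mathlib

section
/- Suppose b is a trilinear form on a Hilbert space V (with V-norm ‖·‖ and H-norm |·|_H via a Gelfand triple) satisfying |b(u,v,w)| ≤ 2‖u‖^{1/2}|u|_H^{1/2}‖w‖^{1/2}|w|_H^{1/2}‖v‖ and b(u,v,w) = −b(u,w,v). Then for all u, v ∈ V: |b(u,u,u−v) − b(v,v,u−v)| ≤ 2‖u‖·|u−v|_H·‖u−v‖. -/
/-- In a Gelfand triple `V ↪ H ↪ V*` (embedding `i : V → H`, with `‖x‖` the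
`V`-norm and `‖i x‖` the `H`-norm), if the trilinear form `b` satisfies the
interpolation bound and the antisymmetry in the last two variables, then
`|b(u,u,u−v) − b(v,v,u−v)| ≤ 2‖u‖·|u−v|_H·‖u−v‖`. -/
theorem trilinear_difference_bound {V H : Type*}
    [NormedAddCommGroup V] [InnerProductSpace ℝ V] [CompleteSpace V]
    [NormedAddCommGroup H] [InnerProductSpace ℝ H] [CompleteSpace H]
    (i : V →L[ℝ] H) (hi : DenseRange i)
    (b : V →ₗ[ℝ] V →ₗ[ℝ] V →ₗ[ℝ] ℝ)
    (hb : ∀ u v w : V,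
      |b u v w| ≤ 2 * ‖u‖ ^ ((1 : ℝ) / 2) * ‖i u‖ ^ ((1 : ℝ) / 2)
        * ‖w‖ ^ ((1 : ℝ) / 2) * ‖i w‖ ^ ((1 : ℝ) / 2) * ‖v‖)
    (hanti : ∀ u v w : V, b u v w = - b u w v) :
    ∀ u v : V,
      |b u u (u - v) - b v v (u - v)| ≤ 2 * ‖u‖ * ‖i (u - v)‖ * ‖u - v‖ := by
  intro u v
  set w := u - v with hw
  have hzero : b v w w = 0 := by have := hanti v w w; linarith
  have h1 : b w u w = b u u w - b v u w := by simp [hw, map_sub]; ring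
  have h2 : b v w w = b v u w - b v v w := by simp [hw, map_sub]; ring
  have key : b u u w - b v v w = b w u w := by linarith
  rw [key]
  have hsq : ∀ x : ℝ, 0 ≤ x → x ^ ((1:ℝ)/2) * x ^ ((1:ℝ)/2) = x := by
    intro x hx
    rw [← Real.rpow_add' hx (by norm_num)]
    norm_num
  have hb' := hb w u w
  have e1 := hsq ‖w‖ (norm_nonneg _)
  have e2 := hsq ‖i w‖ (norm_nonneg _)
  calc |b w u w| ≤ 2 * ‖w‖ ^ ((1:ℝ)/2) * ‖i w‖ ^ ((1:ℝ)/2)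
        * ‖w‖ ^ ((1:ℝ)/2) * ‖i w‖ ^ ((1:ℝ)/2) * ‖u‖ := hb'
    _ = 2 * (‖w‖ ^ ((1:ℝ)/2) * ‖w‖ ^ ((1:ℝ)/2)) * (‖i w‖ ^ ((1:ℝ)/2) * ‖i w‖ ^ ((1:ℝ)/2)) * ‖u‖ := by ring
    _ = 2 * ‖u‖ * ‖i w‖ * ‖w‖ := by rw [e1, e2]; ring
end

section
/- Let G(y) = dist(y, closed unit ball)⁴ on a Hilbert space H. Then G is twice Fréchet differentiable at every y with |y| ≠ 1, and G′(y)(v) = 4 g(y) ⟨y − π(y), v⟩ and G″(y)(h,v) = 8⟨y−π(y), h⟩⟨y−π(y), v⟩ + 4 g(y)·1_{|y|>1}[⟨h,v⟩(1 − 1/|y|) + |y|^{-3}⟨y,h⟩⟨y,v⟩], where g(y) = dist(y, closed unit ball)² and π is the projection onto the closed unit ball. -/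
open scoped RealInnerProductSpace

noncomputable def proj {H : Type*} [NormedAddCommGroup H] [InnerProductSpace ℝ H]
    (y : H) : H := if ‖y‖ ≤ 1 then y else ‖y‖⁻¹ • y

noncomputable def gfun {H : Type*} [NormedAddCommGroup H] [InnerProductSpace ℝ H]
    (y : H) : ℝ := (Metric.infDist y (Metric.closedBall (0 : H) 1)) ^ 2

noncomputable def Gfun {H : Type*} [NormedAddCommGroup H] [InnerProductSpace ℝ H]
    (y : H) : ℝ := (Metric.infDist y (Metric.closedBall (0 : H) 1)) ^ 4

/-! Off the unit sphere, `G` agrees near `y` either with `0` (inside the ball) or with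
`(‖z‖ - 1) ^ 4` (outside). A radial function `φ (‖z‖)` has derivative
`(φ' (‖z‖) / ‖z‖) • ⟪z, ·⟫`, and differentiating a map `ψ (‖z‖) • ⟪z, ·⟫` once more gives
`ψ (‖y‖) ⟪h, v⟫ + (ψ' (‖y‖) / ‖y‖) ⟪y, h⟫ ⟪y, v⟫`. -/

open Filter Topology Metric

theorem infDist_closedBall_zero {E : Type*} [NormedAddCommGroup E] [NormedSpace ℝ E]
    (z : E) {r : ℝ} (hr : 0 ≤ r) : infDist z (closedBall 0 r) = max (‖z‖ - r) 0 := by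
  rcases le_or_gt ‖z‖ r with hz | hz
  · rw [infDist_zero_of_mem (by simpa using hz), max_eq_right (by linarith)]
  rw [max_eq_left (by linarith)]
  have hz0 : ‖z‖ ≠ 0 := by linarith
  refine le_antisymm ?_ ((le_infDist ⟨0, by simpa using hr⟩).2 fun w hw => ?_)
  · have hmem : (r / ‖z‖) • z ∈ closedBall (0 : E) r := by
      simp [norm_smul, abs_of_nonneg hr, hz0]
    have hc : 0 ≤ 1 - r / ‖z‖ := by rw [sub_nonneg, div_le_one₀ (by linarith)]; exact hz.le
    calc infDist z (closedBall 0 r) ≤ ‖(1 - r / ‖z‖) • z‖ := by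
          simpa [dist_eq_norm, sub_smul] using infDist_le_dist_of_mem hmem
      _ = ‖z‖ - r := by
          rw [norm_smul, Real.norm_of_nonneg hc]
          field_simp
  · rw [mem_closedBall, dist_zero_right] at hw
    linarith [norm_sub_norm_le z w, dist_eq_norm z w]

section
variable {H : Type*} [NormedAddCommGroup H] [InnerProductSpace ℝ H]

theorem gfun_eq (z : H) : gfun z = max (‖z‖ - 1) 0 ^ 2 := by
  rw [gfun, infDist_closedBall_zero z zero_le_one]

theorem Gfun_eq (z : H) : Gfun z = max (‖z‖ - 1) 0 ^ 4 := by
  rw [Gfun, infDist_closedBall_zero z zero_le_one]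

theorem Gfun_eventuallyEq_zero {y : H} (hy : ‖y‖ < 1) : Gfun =ᶠ[𝓝 y] 0 := by
  filter_upwards [(isOpen_lt continuous_norm continuous_const).mem_nhds hy] with z hz
  simp [Gfun_eq, max_eq_right (sub_nonpos.2 (le_of_lt hz))]

theorem Gfun_eventuallyEq_of_one_lt_norm {y : H} (hy : 1 < ‖y‖) :
    Gfun =ᶠ[𝓝 y] fun z : H => (‖z‖ - 1) ^ 4 := by
  filter_upwards [(isOpen_lt continuous_const continuous_norm).mem_nhds hy] with z hz
  rw [Gfun_eq, max_eq_left (by linarith [show 1 < ‖z‖ from hz])]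

theorem inner_sub_proj_of_one_lt_norm {y : H} (hy : 1 < ‖y‖) (v : H) :
    ⟪y - proj y, v⟫ = (1 - ‖y‖⁻¹) * ⟪y, v⟫ := by
  rw [proj, if_neg hy.not_ge, inner_sub_left, real_inner_smul_left]
  ring

theorem hasFDerivAt_norm {x : H} (hx : x ≠ 0) :
    HasFDerivAt (‖·‖) (‖x‖⁻¹ • innerSL ℝ x) x := by
  have hx0 : ‖x‖ ≠ 0 := norm_ne_zero_iff.2 hx
  have hsqrt : (‖·‖) = Real.sqrt ∘ fun z : H => ‖z‖ ^ 2 := by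
    funext z; simp
  rw [hsqrt]
  refine ((Real.hasDerivAt_sqrt (pow_ne_zero 2 hx0)).comp_hasFDerivAt x
    (hasStrictFDerivAt_norm_sq x).hasFDerivAt).congr_fderiv ?_
  ext v
  simp only [Real.sqrt_sq (norm_nonneg x), smul_apply, coe_innerSL_apply, nsmul_eq_mul,
    Nat.cast_ofNat, smul_eq_mul]
  field_simp

theorem HasDerivAt.hasFDerivAt_comp_norm {φ : ℝ → ℝ} {φ' : ℝ} {x : H}
    (hφ : HasDerivAt φ φ' ‖x‖) (hx : x ≠ 0) :
    HasFDerivAt (fun z => φ ‖z‖) ((φ' * ‖x‖⁻¹) • innerSL ℝ x) x := by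
  rw [mul_smul]
  exact hφ.comp_hasFDerivAt x (hasFDerivAt_norm hx)

/-- `innerSL ℝ` is only conjugate-linear in its first argument as typed; over `ℝ` it is
bilinear, and this is the form in which it can be a Fréchet derivative. -/
noncomputable def realInnerSL : H →L[ℝ] H →L[ℝ] ℝ := innerSL ℝ

@[simp] theorem realInnerSL_apply (x v : H) : realInnerSL x v = ⟪x, v⟫ := rfl

theorem HasDerivAt.hasFDerivAt_smul_realInnerSL {ψ : ℝ → ℝ} {ψ' : ℝ} {x : H}
    (hψ : HasDerivAt ψ ψ' ‖x‖) (hx : x ≠ 0) :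
    HasFDerivAt (fun z => ψ ‖z‖ • realInnerSL z)
      (ψ ‖x‖ • realInnerSL +
        ((ψ' * ‖x‖⁻¹) • realInnerSL x).smulRight (realInnerSL x)) x :=
  (hψ.hasFDerivAt_comp_norm hx).smul realInnerSL.hasFDerivAt

theorem fderiv_Gfun_eventuallyEq_of_one_lt_norm {y : H} (hy : 1 < ‖y‖) :
    fderiv ℝ (Gfun (H := H)) =ᶠ[𝓝 y]
      fun z : H => (4 * (‖z‖ - 1) ^ 3 * ‖z‖⁻¹) • realInnerSL z := by
  filter_upwards [(Gfun_eventuallyEq_of_one_lt_norm hy).fderiv (𝕜 := ℝ),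
    (isOpen_lt continuous_const continuous_norm).mem_nhds hy] with z hDz hz
  have hz0 : z ≠ 0 := norm_pos_iff.1 (zero_lt_one.trans hz)
  have hφ : HasDerivAt (fun t : ℝ => (t - 1) ^ 4) (4 * (‖z‖ - 1) ^ 3) ‖z‖ := by
    refine (((hasDerivAt_id' _).sub_const 1).fun_pow 4).congr_deriv ?_
    norm_num
  rw [hDz, (hφ.hasFDerivAt_comp_norm hz0).fderiv]
  rfl

theorem hasFDerivAt_fderiv_Gfun_of_one_lt_norm {y : H} (hy : 1 < ‖y‖) :
    HasFDerivAt (fderiv ℝ Gfun)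
      ((4 * (‖y‖ - 1) ^ 3 * ‖y‖⁻¹) • realInnerSL +
        (((12 * (‖y‖ - 1) ^ 2 * ‖y‖⁻¹ - 4 * (‖y‖ - 1) ^ 3 * (‖y‖ ^ 2)⁻¹) * ‖y‖⁻¹) •
          realInnerSL y).smulRight (realInnerSL y)) y := by
  have hψ : HasDerivAt (fun t : ℝ => 4 * (t - 1) ^ 3 * t⁻¹)
      (12 * (‖y‖ - 1) ^ 2 * ‖y‖⁻¹ - 4 * (‖y‖ - 1) ^ 3 * (‖y‖ ^ 2)⁻¹) ‖y‖ := by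
    refine (((((hasDerivAt_id _).sub_const 1).pow 3).const_mul 4).mul
      (hasDerivAt_inv (zero_lt_one.trans hy).ne')).congr_deriv ?_
    simp only [Pi.pow_apply]
    ring
  have hy0 : y ≠ 0 := norm_pos_iff.1 (zero_lt_one.trans hy)
  exact (hψ.hasFDerivAt_smul_realInnerSL hy0).congr_of_eventuallyEq
    (fderiv_Gfun_eventuallyEq_of_one_lt_norm hy)

end

theorem Gfun_second_derivative_general {H : Type*} [NormedAddCommGroup H]
    [InnerProductSpace ℝ H] (y : H) (hy : ‖y‖ ≠ 1) :
    ContDiffAt ℝ 2 Gfun y ∧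
    (∀ v : H, fderiv ℝ Gfun y v = 4 * gfun y * ⟪y - proj y, v⟫) ∧
    (∀ h v : H, fderiv ℝ (fun z => fderiv ℝ Gfun z) y h v =
      8 * ⟪y - proj y, h⟫ * ⟪y - proj y, v⟫ +
        4 * gfun y *
          (if 1 < ‖y‖ then
            ⟪h, v⟫ * (1 - ‖y‖⁻¹) + (‖y‖ ^ 3)⁻¹ * ⟪y, h⟫ * ⟪y, v⟫
          else 0)) := by
  rcases hy.lt_or_gt with hlt | hgt
  · have hG := Gfun_eventuallyEq_zero hlt
    have hDG : fderiv ℝ Gfun =ᶠ[𝓝 y] 0 := by simpa using hG.fderiv (𝕜 := ℝ)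
    have hg : gfun y = 0 := by simp [gfun_eq, hlt.le]
    refine ⟨contDiffAt_const.congr_of_eventuallyEq hG, fun v => ?_, fun h v => ?_⟩
    · simp [hDG.eq_of_nhds, hg]
    · simp [hDG.fderiv_eq, hg, proj, hlt.le]
  · have hy0 : y ≠ 0 := norm_pos_iff.1 (zero_lt_one.trans hgt)
    have hg : gfun y = (‖y‖ - 1) ^ 2 := by simp [gfun_eq, hgt.le]
    refine ⟨?_, fun v => ?_, fun h v => ?_⟩
    · exact (((contDiffAt_norm ℝ hy0).sub contDiffAt_const).pow 4).congr_of_eventuallyEq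
        (Gfun_eventuallyEq_of_one_lt_norm hgt)
    · rw [(fderiv_Gfun_eventuallyEq_of_one_lt_norm hgt).eq_of_nhds, hg,
        inner_sub_proj_of_one_lt_norm hgt]
      simp only [smul_apply, realInnerSL_apply, smul_eq_mul]
      field_simp
    · rw [(hasFDerivAt_fderiv_Gfun_of_one_lt_norm hgt).fderiv, if_pos hgt, hg,
        inner_sub_proj_of_one_lt_norm hgt, inner_sub_proj_of_one_lt_norm hgt]
      simp only [add_apply, smul_apply,
        ContinuousLinearMap.smulRight_apply, realInnerSL_apply, smul_eq_mul]
      field_simp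
      ring

/-- At every point `y` with `‖y‖ ≠ 1`, the function `G = dist(·, B̄(0,1))⁴` is
twice (Fréchet) differentiable, with
`G′(y)(v) = 4 g(y) ⟪y − π(y), v⟫` and
`G″(y)(h,v) = 8⟪y−π(y),h⟫⟪y−π(y),v⟫
  + 4 g(y)·1_{‖y‖>1}[⟪h,v⟫(1 − ‖y‖⁻¹) + ‖y‖⁻³⟪y,h⟫⟪y,v⟫]`. -/
theorem Gfun_second_derivative {H : Type*} [NormedAddCommGroup H]
    [InnerProductSpace ℝ H] [CompleteSpace H] (y : H) (hy : ‖y‖ ≠ 1) :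
    ContDiffAt ℝ 2 Gfun y ∧
    (∀ v : H, fderiv ℝ Gfun y v = 4 * gfun y * ⟪y - proj y, v⟫) ∧
    (∀ h v : H, fderiv ℝ (fun z => fderiv ℝ Gfun z) y h v =
      8 * ⟪y - proj y, h⟫ * ⟪y - proj y, v⟫ +
        4 * gfun y *
          (if 1 < ‖y‖ then
            ⟪h, v⟫ * (1 - ‖y‖⁻¹) + (‖y‖ ^ 3)⁻¹ * ⟪y, h⟫ * ⟪y, v⟫
          else 0)) :=
  Gfun_second_derivative_general y hy
end
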